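/- The first homotopy move preserves the pairing: if P₂ is obtained from P₁ by deleting a doubled letter AA occurring within a single component, then (w_i, w_j)_{P₁} = (w_i, w_j)_{P₂} for all i < j. -/

import Mathlib

/-! Nanophrases over a set `α` (with involution `τ`) in the sense of Turaev,
with letters drawn from a type `L`.  A phrase is encoded as a single list with
`none` acting as the separator `|` between components; thus the homotopy moves
may modify subwords spanning several components. -/

/-- A nanophrase over `α` with letters in `L`: a projection `L → α` and a word
with separators (`none`) dividing the components. -/
structure NPhrase (α : Type*) (L : Type*) where
  proj : L → α
  word : List (Option L)

namespace NPhrase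

/-- The components of a separator-encoded phrase word. -/
def comps {L : Type*} : List (Option L) → List (List L)
  | [] => [[]]
  | none :: l => [] :: comps l
  | some a :: l =>
      match comps l with
      | [] => [[a]]
      | c :: cs => (a :: c) :: cs

/-- Re-encode a list of components as a separator-encoded phrase word. -/
def ofComps {L : Type*} (cs : List (List L)) : List (Option L) :=
  List.intercalate [none] (cs.map (fun c => c.map some))

/-- The letters of a phrase word (separators removed). -/
def letters {L : Type*} (w : List (Option L)) : List L := w.filterMap id

/-- The Gauss condition: every letter occurs exactly twice or not at all. -/
def IsGauss {α L : Type*} [DecidableEq L] (P : NPhrase α L) : Prop :=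
  ∀ x : L, (letters P.word).count x = 0 ∨ (letters P.word).count x = 2

/-- A list consisting only of separators. -/
def Seps {L : Type*} (s : List (Option L)) : Prop := ∀ x ∈ s, x = none

/-- Isomorphism of nanophrases: a bijective relabelling of the letters which
preserves the projections on the letters actually occurring. -/
def Isomorphic {α L : Type*} (P Q : NPhrase α L) : Prop :=
  ∃ e : L ≃ L, (∀ x ∈ letters P.word, Q.proj (e x) = P.proj x) ∧
    Q.word = P.word.map (Option.map e)

/-- One elementary step of homotopy of nanophrases: an isomorphism or one of the
three homotopy moves (the modified subwords may span several components, i.e.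
separators may occur between the displayed consecutive letters). -/
inductive Step {α L : Type*} (τ : α → α) : NPhrase α L → NPhrase α L → Prop
  | iso (g g' : L → α) (w : List (Option L)) (e : L ≃ L)
      (hg : ∀ x ∈ letters w, g' (e x) = g x) :
      Step τ ⟨g, w⟩ ⟨g', w.map (Option.map e)⟩
  | move1 (g : L → α) (A : L) (x s y : List (Option L)) (hs : Seps s) :
      Step τ ⟨g, x ++ [some A] ++ s ++ [some A] ++ y⟩ ⟨g, x ++ s ++ y⟩
  | move2 (g : L → α) (A B : L) (x s₁ y s₂ z : List (Option L))
      (hs₁ : Seps s₁) (hs₂ : Seps s₂) (hAB : g B = τ (g A)) :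
      Step τ ⟨g, x ++ [some A] ++ s₁ ++ [some B] ++ y ++ [some B] ++ s₂ ++ [some A] ++ z⟩
             ⟨g, x ++ s₁ ++ y ++ s₂ ++ z⟩
  | move3 (g : L → α) (A B C : L) (x s₁ y s₂ z s₃ t : List (Option L))
      (hs₁ : Seps s₁) (hs₂ : Seps s₂) (hs₃ : Seps s₃)
      (hAB : g A = g B) (hBC : g B = g C) :
      Step τ ⟨g, x ++ [some A] ++ s₁ ++ [some B] ++ y ++ [some A] ++ s₂ ++ [some C] ++ z
                  ++ [some B] ++ s₃ ++ [some C] ++ t⟩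
             ⟨g, x ++ [some B] ++ s₁ ++ [some A] ++ y ++ [some C] ++ s₂ ++ [some A] ++ z
                  ++ [some C] ++ s₃ ++ [some B] ++ t⟩

/-- Homotopy of nanophrases (with the diagonal homotopy data): the equivalence
relation generated by isomorphisms and the three homotopy moves. -/
def Homotopic {α L : Type*} (τ : α → α) : NPhrase α L → NPhrase α L → Prop :=
  Relation.EqvGen (Step τ)

/-- Relations for the group `Π = ⟨ z_a (a ∈ α) ∣ z_a z_{τ(a)} = 1 ⟩`. -/
def gRels {α : Type*} (τ : α → α) : Set (FreeGroup α) :=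
  {r | ∃ a : α, r = FreeGroup.of a * FreeGroup.of (τ a)}

/-- Relations for the abelian group `π = ⟨ a ∈ α ∣ a·τ(a) = 1, ab = ba ⟩`. -/
def piRels {α : Type*} (τ : α → α) : Set (FreeGroup α) :=
  {r | (∃ a : α, r = FreeGroup.of a * FreeGroup.of (τ a)) ∨
    ∃ a b : α, r = FreeGroup.of a * FreeGroup.of b * (FreeGroup.of a)⁻¹ * (FreeGroup.of b)⁻¹}

/-- The value of `γ` on one component (a word), given the list `pre` of letters
of the phrase read before it: the ordered product of `z_{|X|}` at a first
occurrence and `z_{τ(|X|)}` at a second occurrence. -/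
def gammaWord {α L : Type*} [DecidableEq L] (τ : α → α) (g : L → α) :
    List L → List L → PresentedGroup (gRels τ)
  | _, [] => 1
  | pre, n :: l =>
      (if n ∈ pre then PresentedGroup.of (τ (g n)) else PresentedGroup.of (g n)) *
        gammaWord τ g (pre ++ [n]) l

/-- The `i`-th coordinate (0-indexed) of the invariant `γ` of a nanophrase. -/
def gammaCoord {α L : Type*} [DecidableEq L] (τ : α → α) (P : NPhrase α L) (i : ℕ) :
    PresentedGroup (gRels τ) :=
  gammaWord τ P.proj (((comps P.word).take i).flatten) ((comps P.word).getD i [])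

/-- The pairing `(w_i, w_j)_P ∈ π`: the product of `|X|` over the letters `X`
occurring both in the `i`-th and in the `j`-th component (0-indexed). -/
def pairing {α L : Type*} [DecidableEq L] (τ : α → α) (P : NPhrase α L) (i j : ℕ) :
    PresentedGroup (piRels τ) :=
  ((((comps P.word).getD i []).filter (fun x => x ∈ (comps P.word).getD j [])).map
    (fun x => PresentedGroup.of (P.proj x))).prod

/-- Merge the `l`-th and `(l+1)`-st components of a list of components. -/
def mergeAt {L : Type*} (l : ℕ) (cs : List (List L)) : List (List L) :=
  cs.take l ++ [cs.getD l [] ++ cs.getD (l + 1) []] ++ cs.drop (l + 2)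

/-- The nanophrase `P_a^{1,1;p,q}` of length `k` (0-indexed components): the
letter `0` with `|0| = a` in components `p` and `q`, all other components empty. -/
def stdPair {α : Type*} (k p q : ℕ) (a : α) : NPhrase α ℕ :=
  ⟨fun _ => a, ofComps ((List.range k).map fun i => if i = p ∨ i = q then [0] else [])⟩

/-- The nanoword `w_{a,b} = ABAB` with `|A| = a`, `|B| = b`, viewed as a
nanophrase of length 1. -/
def wab {α : Type*} (a b : α) : NPhrase α ℕ :=
  ⟨fun n => if n = 0 then a else b, [some 0, some 1, some 0, some 1]⟩

/-- The desingularization of an étale word `w`: each letter `A` of multiplicity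
`m` is replaced, at its `i`-th occurrence (1-indexed), by
`A_{1,i} A_{2,i} ⋯ A_{i-1,i} A_{i,i+1} ⋯ A_{i,m}`, where `A_{i,j}` is encoded
as `(A, i, j)`; letters of multiplicity 1 disappear. -/
def desing {L : Type*} [DecidableEq L] (w : List L) : List (L × ℕ × ℕ) :=
  (w.zipIdx.map fun p => (p.2, p.1)).flatMap fun pA =>
    let A := pA.2
    let i := (w.take (pA.1 + 1)).count A
    let m := w.count A
    ((List.range (i - 1)).map fun t => (A, t + 1, i)) ++
      ((List.range (m - i)).map fun t => (A, i, i + 1 + t))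

/-- Two étale words over `α` are homotopic if their desingularizations are
homotopic nanowords (nanophrases of length 1). -/
def EtaleHomotopic {α L : Type*} [DecidableEq L] (τ : α → α)
    (g₁ : L → α) (w₁ : List L) (g₂ : L → α) (w₂ : List L) : Prop :=
  Homotopic τ (⟨fun t => g₁ t.1, (desing w₁).map some⟩ : NPhrase α (L × ℕ × ℕ))
    ⟨fun t => g₂ t.1, (desing w₂).map some⟩

end NPhrase

/-! By the Gauss condition the doubled letter `A` occurs exactly twice, and both occurrences are
in the component where the move happens, so `A` lies in no other component. Hence every other
component is unchanged, and a pairing of the modified component with a different one never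
picks up the letter `A`, since only letters common to both components contribute. -/

namespace NPhrase

lemma flatten_comps {L : Type*} (w : List (Option L)) : (comps w).flatten = letters w := by
  induction w with
  | nil => rfl
  | cons a l ih =>
    cases a with
    | none => simpa [comps, letters] using ih
    | some a =>
      have hl : letters (some a :: l) = a :: letters l := by simp [letters]
      rw [hl, ← ih]
      simp only [comps]
      cases comps l <;> simp

lemma IsGauss.not_mem_of_comps_eq {α L : Type*} [DecidableEq L] {P : NPhrase α L}
    (hG : P.IsGauss) {A : L} {cs₁ cs₂ : List (List L)} {u v : List L}
    (h : comps P.word = cs₁ ++ [u ++ [A, A] ++ v] ++ cs₂) :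
    A ∉ cs₁.flatten ∧ A ∉ cs₂.flatten := by
  have hcount : (letters P.word).count A
      = cs₁.flatten.count A + (u.count A + 2 + v.count A) + cs₂.flatten.count A := by
    rw [← flatten_comps, h]
    simp [List.count_append]
    omega
  have hle : (letters P.word).count A ≤ 2 := by rcases hG A with h | h <;> omega
  exact ⟨List.count_eq_zero.mp (by omega), List.count_eq_zero.mp (by omega)⟩

end NPhrase

namespace List

variable {L : Type*}

lemma getD_append_singleton_append_length (cs₁ cs₂ : List (List L)) (m : List L) :
    (cs₁ ++ [m] ++ cs₂).getD cs₁.length [] = m := by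
  rw [List.append_assoc, List.getD_append_right _ _ _ _ le_rfl]
  simp

lemma getD_append_singleton_append_of_ne {cs₁ cs₂ : List (List L)} {n : ℕ}
    (hn : n ≠ cs₁.length) (m m' : List L) :
    (cs₁ ++ [m] ++ cs₂).getD n [] = (cs₁ ++ [m'] ++ cs₂).getD n [] := by
  rcases lt_or_gt_of_ne hn with h | h
  · simp only [List.append_assoc, List.getD_append _ _ _ _ h]
  · have hm : (cs₁ ++ [m]).length ≤ n := by simp; omega
    have hm' : (cs₁ ++ [m']).length ≤ n := by simp; omega
    rw [List.getD_append_right _ _ _ _ hm, List.getD_append_right _ _ _ _ hm']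
    simp

lemma mem_flatten_of_mem_getD_append_singleton_append {cs₁ cs₂ : List (List L)} {m : List L}
    {n : ℕ} {x : L} (hn : n ≠ cs₁.length) (hx : x ∈ (cs₁ ++ [m] ++ cs₂).getD n []) :
    x ∈ cs₁.flatten ∨ x ∈ cs₂.flatten := by
  have mem_flatten {l : List (List L)} {k : ℕ} (h : x ∈ l.getD k []) : x ∈ l.flatten := by
    rcases lt_or_ge k l.length with hk | hk
    · rw [List.getD_eq_getElem _ _ hk] at h
      exact List.mem_flatten_of_mem (List.getElem_mem hk) h
    · rw [List.getD_eq_default _ _ hk] at h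
      exact absurd h List.not_mem_nil
  rcases lt_or_gt_of_ne hn with h | h
  · rw [List.append_assoc, List.getD_append _ _ _ _ h] at hx
    exact .inl (mem_flatten hx)
  · have hm : (cs₁ ++ [m]).length ≤ n := by simp; omega
    rw [List.getD_append_right _ _ _ _ hm] at hx
    exact .inr (mem_flatten hx)

variable [DecidableEq L] {A : L} {c : List L}

lemma filter_mem_append_pair_append_of_not_mem (hA : A ∉ c) (u v : List L) :
    c.filter (· ∈ u ++ [A, A] ++ v) = c.filter (· ∈ u ++ v) :=
  List.filter_congr fun x hx => by
    have : x ≠ A := fun e => hA (e ▸ hx)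
    simp [this]

lemma filter_append_pair_append_of_not_mem (hA : A ∉ c) (u v : List L) :
    (u ++ [A, A] ++ v).filter (· ∈ c) = (u ++ v).filter (· ∈ c) := by
  simp [List.filter_append, hA]

end List

open NPhrase in
theorem pairing_move1_general {α : Type*} (τ : α → α)
    (P₁ P₂ : NPhrase α ℕ)
    (hG₁ : P₁.IsGauss) (A : ℕ) (cs₁ cs₂ : List (List ℕ)) (u v : List ℕ)
    (hproj : P₁.proj = P₂.proj)
    (h₁ : comps P₁.word = cs₁ ++ [u ++ [A, A] ++ v] ++ cs₂)
    (h₂ : comps P₂.word = cs₁ ++ [u ++ v] ++ cs₂) :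
    ∀ i j, i < j → pairing τ P₁ i j = pairing τ P₂ i j := by
  intro i j hij
  obtain ⟨hA₁, hA₂⟩ := hG₁.not_mem_of_comps_eq h₁
  have hoff : ∀ n ≠ cs₁.length, A ∉ (cs₁ ++ [u ++ v] ++ cs₂).getD n [] :=
    fun n hn hA => (List.mem_flatten_of_mem_getD_append_singleton_append hn hA).elim hA₁ hA₂
  unfold pairing
  rw [h₁, h₂, hproj]
  by_cases hi : i = cs₁.length
  · subst hi
    rw [List.getD_append_singleton_append_length, List.getD_append_singleton_append_length,
      List.getD_append_singleton_append_of_ne (by omega) _ (u ++ v),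
      List.filter_append_pair_append_of_not_mem (hoff j (by omega))]
  · rw [List.getD_append_singleton_append_of_ne hi _ (u ++ v)]
    by_cases hj : j = cs₁.length
    · subst hj
      rw [List.getD_append_singleton_append_length, List.getD_append_singleton_append_length,
        List.filter_mem_append_pair_append_of_not_mem (hoff i hi)]
    · rw [List.getD_append_singleton_append_of_ne hj _ (u ++ v)]

open NPhrase in
/-- the first homotopy move, deleting a doubled letter `AA`
occurring within a single component, preserves the pairing `(w_i, w_j)`. -/
theorem pairing_move1 {α : Type*} [Fintype α] (τ : α → α)
    (hτ : Function.Involutive τ) (P₁ P₂ : NPhrase α ℕ)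
    (hG₁ : P₁.IsGauss) (A : ℕ) (cs₁ cs₂ : List (List ℕ)) (u v : List ℕ)
    (hproj : P₁.proj = P₂.proj)
    (h₁ : comps P₁.word = cs₁ ++ [u ++ [A, A] ++ v] ++ cs₂)
    (h₂ : comps P₂.word = cs₁ ++ [u ++ v] ++ cs₂) :
    ∀ i j, i < j → pairing τ P₁ i j = pairing τ P₂ i j :=
  pairing_move1_general τ P₁ P₂ hG₁ A cs₁ cs₂ u v hproj h₁ h₂
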